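/- For every real number r with 0 < r < 1 there exists a map Φ_r : rB_{ℓ₂} × B_{ℓ₂} → ℳ_u(B_{ℓ₂}) such that: (i) Φ_r is injective; (ii) π(Φ_r(w,z)) = w for every (w,z) ∈ rB_{ℓ₂} × B_{ℓ₂}, so the image of Φ_r(w,·) is contained in the fiber π^{-1}(w); and (iii) Φ_r is analytic, meaning that for every f ∈ 𝒜_u(B_{ℓ₂}) the map (w,z) ↦ Φ_r(w,z)(f) is a bounded holomorphic function on the open set rB_{ℓ₂} × B_{ℓ₂} ⊆ ℓ₂ × ℓ₂. -/

import Mathlib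

open Metric Set Filter

noncomputable section

/-- `ℓ2` is the complex Hilbert space of square-summable sequences indexed by `ℕ`. -/
abbrev ℓ2 : Type := lp (fun _ : ℕ => ℂ) 2

/-- The open unit ball of `ℓ2`. -/
def oB : Set ℓ2 := Metric.ball 0 1

/-- The closed unit ball of `ℓ2`. -/
def cB : Set ℓ2 := Metric.closedBall 0 1

/-- The unit sphere of `ℓ2`. -/
def sph : Set ℓ2 := Metric.sphere 0 1

/-- The coordinate functional `x ↦ ⟨x, eₙ⟩ = xₙ` (inner product linear in the first variable). -/
def coord (n : ℕ) : ℓ2 → ℂ := fun x => x n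

/-- Supremum norm on the open unit ball, for scalar-valued functions. -/
def supNorm (f : ℓ2 → ℂ) : ℝ := ⨆ x : oB, ‖f (x : ℓ2)‖

/-- Supremum norm on the open unit ball, for `ℓ2`-valued functions. -/
def supNormV (g : ℓ2 → ℓ2) : ℝ := ⨆ x : oB, ‖g (x : ℓ2)‖

/-- Membership in `𝒜ᵤ(B)`: holomorphic on the open unit ball and uniformly continuous there. -/
def MemAu (f : ℓ2 → ℂ) : Prop :=
  DifferentiableOn ℂ f oB ∧ UniformContinuousOn f oB

/-- Membership in `ℋ^∞(B)`: holomorphic and bounded on the open unit ball. -/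
def MemHinf (f : ℓ2 → ℂ) : Prop :=
  DifferentiableOn ℂ f oB ∧ ∃ C, ∀ x ∈ oB, ‖f x‖ ≤ C

/-- Membership in `ℋ^∞(B,ℓ2)`: holomorphic and bounded on the open unit ball, `ℓ2`-valued. -/
def MemHinfV (g : ℓ2 → ℓ2) : Prop :=
  DifferentiableOn ℂ g oB ∧ ∃ C, ∀ x ∈ oB, ‖g x‖ ≤ C

/-- `fext` is (a representative of) the unique continuous extension `f̃` of `f` to the
closed unit ball. -/
def IsExt (f fext : ℓ2 → ℂ) : Prop :=
  ContinuousOn fext cB ∧ Set.EqOn fext f oB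

/-- An element of the scalar-valued spectrum `ℳᵤ(B)`: a nonzero continuous `ℂ`-algebra
homomorphism `𝒜ᵤ(B) → ℂ`, encoded as a map on representatives. -/
structure MuHom where
  toFun : (ℓ2 → ℂ) → ℂ
  map_add : ∀ f g, MemAu f → MemAu g → toFun (f + g) = toFun f + toFun g
  map_mul : ∀ f g, MemAu f → MemAu g → toFun (f * g) = toFun f * toFun g
  map_smul : ∀ (c : ℂ) (f), MemAu f → toFun (c • f) = c * toFun f
  respects : ∀ f g, MemAu f → MemAu g → Set.EqOn f g oB → toFun f = toFun g
  nonzero : ∃ f, MemAu f ∧ toFun f ≠ 0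
  cont : ∃ C, ∀ f, MemAu f → ‖toFun f‖ ≤ C * supNorm f

/-- An element of the vector-valued spectrum `ℳ_{u,∞}(B,B)`: a nonzero continuous `ℂ`-algebra
homomorphism `𝒜ᵤ(B) → ℋ^∞(B)`, encoded as a map on representatives. -/
structure MuInfHom where
  toFun : (ℓ2 → ℂ) → (ℓ2 → ℂ)
  maps_mem : ∀ f, MemAu f → MemHinf (toFun f)
  map_add : ∀ f g, MemAu f → MemAu g → ∀ x ∈ oB, toFun (f + g) x = toFun f x + toFun g x
  map_mul : ∀ f g, MemAu f → MemAu g → ∀ x ∈ oB, toFun (f * g) x = toFun f x * toFun g x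
  map_smul : ∀ (c : ℂ) (f), MemAu f → ∀ x ∈ oB, toFun (c • f) x = c * toFun f x
  respects : ∀ f g, MemAu f → MemAu g → Set.EqOn f g oB → Set.EqOn (toFun f) (toFun g) oB
  nonzero : ∃ f, MemAu f ∧ ∃ x ∈ oB, toFun f x ≠ 0
  cont : ∃ C, ∀ f, MemAu f → ∀ x ∈ oB, ‖toFun f x‖ ≤ C * supNorm f

/-- An element of the scalar-valued spectrum `ℳ_∞(B)`: a nonzero continuous `ℂ`-algebra
homomorphism `ℋ^∞(B) → ℂ`, encoded as a map on representatives. -/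
structure MInfHom where
  toFun : (ℓ2 → ℂ) → ℂ
  map_add : ∀ f g, MemHinf f → MemHinf g → toFun (f + g) = toFun f + toFun g
  map_mul : ∀ f g, MemHinf f → MemHinf g → toFun (f * g) = toFun f * toFun g
  map_smul : ∀ (c : ℂ) (f), MemHinf f → toFun (c • f) = c * toFun f
  respects : ∀ f g, MemHinf f → MemHinf g → Set.EqOn f g oB → toFun f = toFun g
  nonzero : ∃ f, MemHinf f ∧ toFun f ≠ 0
  cont : ∃ C, ∀ f, MemHinf f → ‖toFun f‖ ≤ C * supNorm f

/-- `ξ(Φ) = g`: the projection of `Φ` is the function `g`, i.e. `Φ(⟨·,eₙ⟩)(x) = g(x)ₙ`. -/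
def xiEq (Φ : MuInfHom) (g : ℓ2 → ℓ2) : Prop :=
  ∀ x ∈ oB, ∀ n : ℕ, Φ.toFun (coord n) x = g x n

/-- `Φ = C_g`: `Φ` is the composition homomorphism `f ↦ f̃ ∘ g`. -/
def IsCompHom (Φ : MuInfHom) (g : ℓ2 → ℓ2) : Prop :=
  ∀ f fext, MemAu f → IsExt f fext → ∀ x ∈ oB, Φ.toFun f x = fext (g x)

/-- The open unit ball of `ℋ^∞(B,ℓ2)`. -/
def ballHV : Set (ℓ2 → ℓ2) := {h | MemHinfV h ∧ supNormV h < 1}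

/-- The open unit ball of `ℋ^∞(B)`. -/
def ballH : Set (ℓ2 → ℂ) := {h | MemHinf h ∧ supNorm h < 1}

/-- `F` is holomorphic on the open unit ball of `ℋ^∞(B,ℓ2)`: it is locally bounded there and
`ℂ`-differentiable along every complex line (which, for maps on a ball of a Banach space, is
equivalent to Fréchet holomorphy). -/
def HolomorphicOnBallHV (F : (ℓ2 → ℓ2) → ℂ) : Prop :=
  (∀ h ∈ ballHV, ∃ ε > 0, ∃ C, ∀ k ∈ ballHV, supNormV (k - h) < ε → ‖F k‖ ≤ C) ∧
  (∀ h ∈ ballHV, ∀ k, MemHinfV k →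
    DifferentiableOn ℂ (fun z : ℂ => F (h + z • k)) {z : ℂ | (h + z • k) ∈ ballHV})

/-- `F` is holomorphic on the open unit ball of `ℋ^∞(B)`: it is locally bounded there and
`ℂ`-differentiable along every complex line. -/
def HolomorphicOnBallH (F : (ℓ2 → ℂ) → ℂ) : Prop :=
  (∀ h ∈ ballH, ∃ ε > 0, ∃ C, ∀ k ∈ ballH, supNorm (k - h) < ε → ‖F k‖ ≤ C) ∧
  (∀ h ∈ ballH, ∀ k, MemHinf k →
    DifferentiableOn ℂ (fun z : ℂ => F (h + z • k)) {z : ℂ | (h + z • k) ∈ ballH})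

/-- `h ∈ 𝒞ℓ(f,g)` (with `fext = f̃` the continuous extension of `f` to the closed ball):
there is a net `(g_α)` in the open unit ball of `ℋ^∞(B,ℓ2)` converging weak-star to `g`
(pointwise weak convergence of values) with `f̃(g_α(y)) → h(y)` for every `y ∈ B`. -/
def InCluster (fext : ℓ2 → ℂ) (g : ℓ2 → ℓ2) (h : ℓ2 → ℂ) : Prop :=
  ∃ (ι : Type) (l : Filter ι), l.NeBot ∧ ∃ gA : ι → ℓ2 → ℓ2,
    (∀ i, gA i ∈ ballHV) ∧
    (∀ y ∈ oB, ∀ u : ℓ2,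
      Filter.Tendsto (fun i => (inner ℂ (gA i y) u : ℂ)) l (nhds (inner ℂ (g y) u))) ∧
    (∀ y ∈ oB, Filter.Tendsto (fun i => fext (gA i y)) l (nhds (h y)))

/-- The open set `rB_{ℓ₂} × B_{ℓ₂} ⊆ ℓ₂ × ℓ₂`. -/
def prodBall (r : ℝ) : Set (ℓ2 × ℓ2) := {p | ‖p.1‖ < r ∧ ‖p.2‖ < 1}


-- ===== machinery =====


open scoped Classical

def UU : Ultrafilter ℕ := Ultrafilter.of atTop

lemma UU_le_atTop : (UU : Filter ℕ) ≤ atTop := Ultrafilter.of_le _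

def ulim (g : ℕ → ℂ) : ℂ :=
  if h : ∃ x, Filter.Tendsto g (UU : Filter ℕ) (nhds x) then h.choose else 0

lemma tendsto_ulim {g : ℕ → ℂ} {C : ℝ} (hb : ∀ n, ‖g n‖ ≤ C) :
    Filter.Tendsto g (UU : Filter ℕ) (nhds (ulim g)) := by
  have hle : ↑(UU.map g) ≤ Filter.principal (closedBall (0:ℂ) C) := by
    rw [Ultrafilter.coe_map, Filter.le_principal_iff, Filter.mem_map]
    refine Filter.univ_mem' fun n => ?_
    simpa [mem_closedBall_zero_iff] using hb n
  have hex : ∃ x, Filter.Tendsto g (UU : Filter ℕ) (nhds x) := by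
    obtain ⟨x, -, hx⟩ := (isCompact_closedBall (0:ℂ) C).ultrafilter_le_nhds (UU.map g) hle
    exact ⟨x, by rwa [Ultrafilter.coe_map] at hx⟩
  rw [ulim, dif_pos hex]; exact hex.choose_spec

lemma ulim_eq {g : ℕ → ℂ} {x : ℂ} (h : Filter.Tendsto g (UU : Filter ℕ) (nhds x)) :
    ulim g = x := by
  have hex : ∃ y, Filter.Tendsto g (UU : Filter ℕ) (nhds y) := ⟨x, h⟩
  rw [ulim, dif_pos hex]
  exact tendsto_nhds_unique hex.choose_spec h

lemma ulim_const (c : ℂ) : ulim (fun _ => c) = c := ulim_eq tendsto_const_nhds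

lemma norm_ulim_le {g : ℕ → ℂ} {C : ℝ} (hb : ∀ n, ‖g n‖ ≤ C) : ‖ulim g‖ ≤ C :=
  le_of_tendsto (tendsto_ulim hb).norm (Filter.Eventually.of_forall hb)
lemma schwarz_taylor {φ : ℂ → ℂ} {ρ M : ℝ} (hM : 0 ≤ M) (hρ : 0 < ρ)
    (hd : DifferentiableOn ℂ φ (ball (0:ℂ) ρ))
    (hb : ∀ t ∈ ball (0:ℂ) ρ, ‖φ t‖ ≤ M) :
    ‖deriv φ 0‖ ≤ (2*M+1)/ρ ∧
      ∀ t ∈ ball (0:ℂ) ρ, ‖φ t - φ 0 - t * deriv φ 0‖ ≤ (4*M+3)/ρ^2 * ‖t‖^2 := by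
  have h0 : (0:ℂ) ∈ ball (0:ℂ) ρ := mem_ball_self hρ
  have hmaps1 : MapsTo φ (ball (0:ℂ) ρ) (ball (φ 0) (2*M+1)) := by
    intro t ht
    rw [mem_ball, dist_eq_norm]
    calc ‖φ t - φ 0‖ ≤ ‖φ t‖ + ‖φ 0‖ := norm_sub_le _ _
      _ ≤ M + M := add_le_add (hb t ht) (hb 0 h0)
      _ < 2*M+1 := by linarith
  have hsch1 : ∀ t ∈ ball (0:ℂ) ρ, ‖dslope φ 0 t‖ ≤ (2*M+1)/ρ := fun t ht =>
    Complex.norm_dslope_le_div_of_mapsTo_ball hd (hmaps1.mono_right ball_subset_closedBall) ht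
  set ζ := dslope φ 0 with hζdef
  have hζd : DifferentiableOn ℂ ζ (ball (0:ℂ) ρ) :=
    (Complex.differentiableOn_dslope (isOpen_ball.mem_nhds h0)).mpr hd
  have hζ0 : ζ 0 = deriv φ 0 := dslope_same φ 0
  have hder : ‖deriv φ 0‖ ≤ (2*M+1)/ρ := hζ0 ▸ hsch1 0 h0
  refine ⟨hder, ?_⟩
  have hmaps2 : MapsTo ζ (ball (0:ℂ) ρ) (ball (ζ 0) ((4*M+3)/ρ)) := by
    intro t ht
    rw [mem_ball, dist_eq_norm]
    calc ‖ζ t - ζ 0‖ ≤ ‖ζ t‖ + ‖ζ 0‖ := norm_sub_le _ _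
      _ ≤ (2*M+1)/ρ + (2*M+1)/ρ := add_le_add (hsch1 t ht) (hsch1 0 h0)
      _ < (4*M+3)/ρ := by
          rw [← add_div]
          exact (div_lt_div_iff_of_pos_right hρ).mpr (by linarith)
  have hsch2 : ∀ t ∈ ball (0:ℂ) ρ, ‖dslope ζ 0 t‖ ≤ (4*M+3)/ρ/ρ := fun t ht =>
    Complex.norm_dslope_le_div_of_mapsTo_ball hζd (hmaps2.mono_right ball_subset_closedBall) ht
  intro t ht
  by_cases ht0 : t = 0
  · subst ht0
    simp only [sub_self, zero_mul, sub_zero, norm_zero]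
    positivity
  · have key1 : ζ t = (φ t - φ 0) / t := by
      rw [hζdef, dslope_of_ne φ ht0, slope_def_field]
      simp
    have key2 : dslope ζ 0 t = (ζ t - ζ 0) / t := by
      rw [dslope_of_ne ζ ht0, slope_def_field]
      simp
    have keyeq : φ t - φ 0 - t * deriv φ 0 = t * (t * dslope ζ 0 t) := by
      rw [key2, key1, hζ0]
      field_simp
    rw [keyeq]
    have h1 : ‖t * (t * dslope ζ 0 t)‖ = ‖t‖^2 * ‖dslope ζ 0 t‖ := by
      rw [norm_mul, norm_mul, sq]; ring
    rw [h1, mul_comm ((4*M+3)/ρ^2) (‖t‖^2)]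
    refine mul_le_mul_of_nonneg_left ?_ (by positivity)
    calc ‖dslope ζ 0 t‖ ≤ (4*M+3)/ρ/ρ := hsch2 t ht
      _ = (4*M+3)/ρ^2 := by rw [div_div, sq]

section DiffLimit

variable {E : Type*} [NormedAddCommGroup E] [NormedSpace ℂ E]

/-- Pointwise Taylor estimate for a bounded holomorphic function on a ball. -/
lemma taylor_est {g : E → ℂ} {U : Set E} (hU : IsOpen U) {x₀ : E} {R M : ℝ}
    (hR : 0 < R) (hM : 0 ≤ M) (hball : ball x₀ (2*R) ⊆ U)
    (hd : DifferentiableOn ℂ g U) (hb : ∀ x ∈ U, ‖g x‖ ≤ M) (u : E) :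
    ‖fderiv ℂ g x₀ u‖ ≤ (2*M+1)/R * ‖u‖ ∧
      (‖u‖ < R → ‖g (x₀ + u) - g x₀ - fderiv ℂ g x₀ u‖ ≤ (4*M+3)/R^2 * ‖u‖^2) := by
  have hx₀U : x₀ ∈ U := hball (by simp [mem_ball, hR])
  by_cases hu0 : u = 0
  · subst hu0
    refine ⟨?_, ?_⟩ <;> simp
  have hun : 0 < ‖u‖ := norm_pos_iff.mpr hu0
  set ρ : ℝ := 2*R/‖u‖ with hρdef
  have hρ : 0 < ρ := by positivity
  set φ : ℂ → ℂ := fun t => g (x₀ + t • u) with hφdef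
  have hline : ∀ t : ℂ, t ∈ ball (0:ℂ) ρ → x₀ + t • u ∈ U := by
    intro t ht
    apply hball
    rw [mem_ball_iff_norm]
    rw [mem_ball_zero_iff] at ht
    have : ‖x₀ + t • u - x₀‖ = ‖t‖ * ‖u‖ := by
      rw [add_sub_cancel_left, norm_smul]
    rw [this]
    calc ‖t‖ * ‖u‖ < ρ * ‖u‖ := by exact mul_lt_mul_of_pos_right ht hun
      _ = 2*R := by rw [hρdef]; field_simp
  have hlin : Differentiable ℂ (fun t : ℂ => x₀ + t • u) :=
    (differentiable_id.smul_const u).const_add x₀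
  have hφd : DifferentiableOn ℂ φ (ball (0:ℂ) ρ) := by
    intro t ht
    exact ((hd.differentiableAt (hU.mem_nhds (hline t ht))).comp t
      (hlin t)).differentiableWithinAt
  have hφb : ∀ t ∈ ball (0:ℂ) ρ, ‖φ t‖ ≤ M := fun t ht => hb _ (hline t ht)
  have hDgAt : DifferentiableAt ℂ g x₀ := hd.differentiableAt (hU.mem_nhds hx₀U)
  have hderφ : HasDerivAt φ (fderiv ℂ g x₀ u) 0 := by
    have h1 : HasDerivAt (fun t : ℂ => x₀ + t • u) u 0 := by
      simpa using ((hasDerivAt_id (0:ℂ)).smul_const u).const_add x₀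
    have h2 : HasFDerivAt g (fderiv ℂ g x₀) (x₀ + (0:ℂ) • u) := by
      simpa using hDgAt.hasFDerivAt
    have := h2.comp_hasDerivAt (0:ℂ) h1; exact this
  have hderφ' : deriv φ 0 = fderiv ℂ g x₀ u := hderφ.deriv
  obtain ⟨hD, hT⟩ := schwarz_taylor hM hρ hφd hφb
  constructor
  · rw [← hderφ']
    calc ‖deriv φ 0‖ ≤ (2*M+1)/ρ := hD
      _ = (2*M+1) * ‖u‖ / (2*R) := by rw [hρdef]; field_simp
      _ ≤ (2*M+1)/R * ‖u‖ := by
          rw [div_mul_eq_mul_div]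
          exact div_le_div_of_nonneg_left (by positivity) hR (by linarith)
  · intro hu
    have h1mem : (1:ℂ) ∈ ball (0:ℂ) ρ := by
      rw [mem_ball_zero_iff]
      have : (1:ℝ) < ρ := by
        rw [hρdef, lt_div_iff₀ hun]
        linarith
      simpa using this
    have := hT 1 h1mem
    simp only [one_smul, norm_one, one_pow, mul_one, one_mul] at this
    rw [hφdef] at this
    simp only [one_smul, zero_smul, add_zero] at this
    rw [hderφ'] at this
    calc ‖g (x₀ + u) - g x₀ - fderiv ℂ g x₀ u‖ ≤ (4*M+3)/ρ^2 := this
      _ = (4*M+3) * ‖u‖^2 / (2*R)^2 := by rw [hρdef]; field_simp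
      _ ≤ (4*M+3)/R^2 * ‖u‖^2 := by
          rw [div_mul_eq_mul_div]
          exact div_le_div_of_nonneg_left (by positivity) (by positivity) (by nlinarith)

lemma diffOn_ulim {U : Set E} (hU : IsOpen U) (g : ℕ → E → ℂ) (M : ℝ) (hM : 0 ≤ M)
    (hd : ∀ n, DifferentiableOn ℂ (g n) U)
    (hb : ∀ n, ∀ x ∈ U, ‖g n x‖ ≤ M) :
    DifferentiableOn ℂ (fun x => ulim (fun n => g n x)) U := by
  intro x₀ hx₀
  obtain ⟨ε, hε0, hballU⟩ := Metric.isOpen_iff.mp hU x₀ hx₀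
  set R := ε/2 with hRdef
  have hR0 : 0 < R := by positivity
  have hball2 : ball x₀ (2*R) ⊆ U := by
    have h : 2*R = ε := by rw [hRdef]; ring
    rw [h]; exact hballU
  have hDb : ∀ (u : E) (n : ℕ), ‖fderiv ℂ (g n) x₀ u‖ ≤ (2*M+1)/R * ‖u‖ :=
    fun u n => (taylor_est hU hR0 hM hball2 (hd n) (hb n) u).1
  set Lfun : E → ℂ := fun u => ulim (fun n => fderiv ℂ (g n) x₀ u) with hLfun
  have hLadd : ∀ u v, Lfun (u+v) = Lfun u + Lfun v := by
    intro u v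
    refine ulim_eq ?_
    have h12 := (tendsto_ulim (fun n => hDb u n)).add (tendsto_ulim (fun n => hDb v n))
    exact Tendsto.congr (fun n => (map_add (fderiv ℂ (g n) x₀) u v).symm) h12
  have hLsmul : ∀ (c : ℂ) (u), Lfun (c • u) = c • Lfun u := by
    intro c u
    refine ulim_eq ?_
    have h1 := (tendsto_ulim (fun n => hDb u n)).const_mul c
    refine Tendsto.congr (fun n => ?_) h1
    rw [map_smul, smul_eq_mul]
  set L₀ : E →ₗ[ℂ] ℂ := { toFun := Lfun, map_add' := hLadd, map_smul' := hLsmul } with hL₀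
  set L : E →L[ℂ] ℂ :=
    LinearMap.mkContinuous L₀ ((2*M+1)/R) (fun u => norm_ulim_le (fun n => hDb u n)) with hL
  have hmemU : ∀ u : E, ‖u‖ < R → x₀ + u ∈ U := by
    intro u hu
    apply hball2
    rw [mem_ball_iff_norm, add_sub_cancel_left]
    linarith
  have hHD : HasFDerivAt (fun x => ulim (fun n => g n x)) L x₀ := by
    rw [hasFDerivAt_iff_isLittleO_nhds_zero, Asymptotics.isLittleO_iff]
    intro c hc
    have hK : (0:ℝ) < (4*M+3)/R^2 := by positivity
    have hδ : (0:ℝ) < min R (c/((4*M+3)/R^2)) := lt_min hR0 (by positivity)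
    filter_upwards [Metric.ball_mem_nhds (0:E) hδ] with u hu
    rw [mem_ball_zero_iff, lt_min_iff] at hu
    obtain ⟨hu1, hu2⟩ := hu
    have hterm : ∀ n, ‖g n (x₀+u) - g n x₀ - fderiv ℂ (g n) x₀ u‖ ≤ (4*M+3)/R^2 * ‖u‖^2 :=
      fun n => (taylor_est hU hR0 hM hball2 (hd n) (hb n) u).2 hu1
    have t1 := tendsto_ulim (fun n => hb n (x₀+u) (hmemU u hu1))
    have t2 := tendsto_ulim (fun n => hb n x₀ hx₀)
    have t3 := tendsto_ulim (fun n => hDb u n)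
    have t4 := (t1.sub t2).sub t3
    have hle : ‖ulim (fun n => g n (x₀+u)) - ulim (fun n => g n x₀) - L u‖
        ≤ (4*M+3)/R^2 * ‖u‖^2 := by
      have hLu : L u = ulim (fun n => fderiv ℂ (g n) x₀ u) := rfl
      rw [hLu]
      exact le_of_tendsto t4.norm (Filter.Eventually.of_forall hterm)
    refine hle.trans ?_
    have h2 : (4*M+3)/R^2 * ‖u‖ ≤ c := by
      calc (4*M+3)/R^2 * ‖u‖ ≤ (4*M+3)/R^2 * (c/((4*M+3)/R^2)) :=
            mul_le_mul_of_nonneg_left hu2.le hK.le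
        _ = c := by rw [mul_comm, div_mul_cancel₀ _ hK.ne']
    calc (4*M+3)/R^2 * ‖u‖^2 = ((4*M+3)/R^2 * ‖u‖) * ‖u‖ := by ring
      _ ≤ c * ‖u‖ := mul_le_mul_of_nonneg_right h2 (norm_nonneg u)
  exact hHD.differentiableAt.differentiableWithinAt

end DiffLimit

section L2Infra

open scoped ENNReal NNReal ComplexConjugate

lemma UniformContinuous.ucOn {α β : Type*} [UniformSpace α] [UniformSpace β] {f : α → β}
    (h : UniformContinuous f) (s : Set α) : UniformContinuousOn f s :=
  Filter.Tendsto.mono_left h inf_le_left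

lemma h2pos : (0:ℝ) < (2:ℝ≥0∞).toReal := by norm_num

/-! coordinate functionals -/

def coordCLM (m : ℕ) : ℓ2 →L[ℂ] ℂ :=
  LinearMap.mkContinuous
    { toFun := fun x : ℓ2 => x m
      map_add' := fun _ _ => rfl
      map_smul' := fun _ _ => rfl }
    1 (fun x => by rw [one_mul]; exact lp.norm_apply_le_norm (by norm_num) x m)

lemma coord_eq_coordCLM (m : ℕ) : coord m = ⇑(coordCLM m) := rfl

lemma memAu_coord (m : ℕ) : MemAu (coord m) := by
  rw [coord_eq_coordCLM]
  exact ⟨(coordCLM m).differentiable.differentiableOn,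
    (coordCLM m).uniformContinuous.ucOn oB⟩

/-! boundedness of uniformly continuous functions on the ball -/

lemma MemAu.bdd {f : ℓ2 → ℂ} (hf : MemAu f) : ∃ C, ∀ x ∈ oB, ‖f x‖ ≤ C := by
  obtain ⟨δ, hδ0, hδ⟩ := Metric.uniformContinuousOn_iff.mp hf.2 1 one_pos
  obtain ⟨N, hN⟩ := exists_nat_gt (1/δ)
  have hN0 : (0:ℝ) < N := lt_trans (by positivity) hN
  have h0B : (0:ℓ2) ∈ oB := by simp [oB]
  have hmem : ∀ (x : ℓ2), x ∈ oB → ∀ j : ℕ, j ≤ N → ((j:ℝ)/(N:ℝ)) • x ∈ oB := by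
    intro x hx j hj
    rw [oB, mem_ball_zero_iff] at hx ⊢
    rw [norm_smul]
    have h1 : ‖((j:ℝ)/(N:ℝ))‖ ≤ 1 := by
      rw [Real.norm_eq_abs, abs_of_nonneg (by positivity), div_le_one hN0]
      exact_mod_cast hj
    nlinarith [norm_nonneg x]
  have key : ∀ i : ℕ, i ≤ N → ∀ x ∈ oB, ‖f (((i:ℝ)/(N:ℝ)) • x)‖ ≤ ‖f 0‖ + i := by
    intro i
    induction i with
    | zero => intro _ x _; simp
    | succ i ih =>
      intro hiN x hx
      have hi : i ≤ N := le_trans (Nat.le_succ i) hiN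
      have hprev := ih hi x hx
      have hdist : dist ((((i+1:ℕ):ℝ)/(N:ℝ)) • x) (((i:ℝ)/(N:ℝ)) • x) < δ := by
        rw [dist_eq_norm, ← sub_smul]
        have heq : ((i+1:ℕ):ℝ)/(N:ℝ) - (i:ℝ)/(N:ℝ) = 1/(N:ℝ) := by
          push_cast; field_simp; ring
        rw [heq, norm_smul]
        have hxn : ‖x‖ < 1 := by rwa [oB, mem_ball_zero_iff] at hx
        have h1N : 1/(N:ℝ) < δ := by
          rw [div_lt_iff₀ hN0]
          rw [div_lt_iff₀ hδ0] at hN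
          linarith [mul_comm δ (N:ℝ)]
        have : ‖1/(N:ℝ)‖ = 1/(N:ℝ) := by
          rw [Real.norm_eq_abs, abs_of_nonneg (by positivity)]
        rw [this]
        nlinarith [norm_nonneg x, div_pos one_pos hN0]
      have hd := hδ _ (hmem x hx (i+1) hiN) _ (hmem x hx i hi) hdist
      have htri : ‖f ((((i+1:ℕ):ℝ)/(N:ℝ)) • x)‖ - ‖f (((i:ℝ)/(N:ℝ)) • x)‖
          ≤ dist (f ((((i+1:ℕ):ℝ)/(N:ℝ)) • x)) (f (((i:ℝ)/(N:ℝ)) • x)) := by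
        rw [dist_eq_norm]
        exact norm_sub_norm_le _ _
      push_cast
      push_cast at hprev htri hd
      linarith
  refine ⟨‖f 0‖ + N, fun x hx => ?_⟩
  have := key N (le_refl N) x hx
  rw [div_self (ne_of_gt hN0), one_smul] at this
  exact this

lemma bddAbove_of_bdd {f : ℓ2 → ℂ} (h : ∃ C, ∀ x ∈ oB, ‖f x‖ ≤ C) :
    BddAbove (Set.range fun x : oB => ‖f (x:ℓ2)‖) := by
  obtain ⟨C, hC⟩ := h
  exact ⟨C, by rintro y ⟨x, rfl⟩; exact hC x x.2⟩

lemma norm_le_supNorm {f : ℓ2 → ℂ} (h : ∃ C, ∀ x ∈ oB, ‖f x‖ ≤ C) {x : ℓ2} (hx : x ∈ oB) :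
    ‖f x‖ ≤ supNorm f := le_ciSup (bddAbove_of_bdd h) (⟨x, hx⟩ : oB)

/-! the spreading embedding -/

def eFun (n : ℕ) (k : ℕ) : ℕ := n + 3^k

lemma eFun_inj (n : ℕ) : Function.Injective (eFun n) := by
  intro a b h
  have : (3:ℕ)^a = 3^b := by
    have := h
    simp only [eFun] at this
    omega
  exact Nat.pow_right_injective (by norm_num) this

lemma eFun_gt (n k : ℕ) : n < eFun n k := by
  have h : 0 < 3^k := pow_pos (by norm_num) k
  simp only [eFun]
  omega

lemma pow3_add_pow3_ne (i k l : ℕ) : 3^i + 3^k ≠ (3:ℕ)^l := by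
  intro h
  have h3 : (1:ℕ) < 3 := by norm_num
  have hi : i < l := by
    by_contra hle
    push_neg at hle
    have h1 : (3:ℕ)^l ≤ 3^i := Nat.pow_le_pow_right (by norm_num) hle
    have h2 : 0 < (3:ℕ)^k := pow_pos (by norm_num) k
    omega
  have hk : k < l := by
    by_contra hle
    push_neg at hle
    have h1 : (3:ℕ)^l ≤ 3^k := Nat.pow_le_pow_right (by norm_num) hle
    have h2 : 0 < (3:ℕ)^i := pow_pos (by norm_num) i
    omega
  have hm : max i k + 1 ≤ l := by omega
  have h1 : (3:ℕ)^i ≤ 3^(max i k) := Nat.pow_le_pow_right (by norm_num) (le_max_left _ _)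
  have h2 : (3:ℕ)^k ≤ 3^(max i k) := Nat.pow_le_pow_right (by norm_num) (le_max_right _ _)
  have h4 : (3:ℕ)^(max i k + 1) ≤ 3^l := Nat.pow_le_pow_right (by norm_num) hm
  rw [pow_succ] at h4
  have h5 : 0 < (3:ℕ)^(max i k) := pow_pos (by norm_num) _
  omega

lemma memℓp_ext (n : ℕ) (z : ℓ2) : Memℓp (Function.extend (eFun n) (⇑z) 0) 2 := by
  apply memℓp_gen
  have hz : Summable (fun k => ‖z k‖ ^ (2:ℝ≥0∞).toReal) := (memℓp_gen_iff h2pos).mp (lp.memℓp z)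
  have heq : (fun m => ‖Function.extend (eFun n) (⇑z) 0 m‖ ^ (2:ℝ≥0∞).toReal)
      = Function.extend (eFun n) (fun k => ‖z k‖ ^ (2:ℝ≥0∞).toReal) 0 := by
    funext m
    rcases em (∃ k, eFun n k = m) with ⟨k, rfl⟩ | hm
    · rw [(eFun_inj n).extend_apply, (eFun_inj n).extend_apply]
    · rw [Function.extend_apply' _ _ _ hm, Function.extend_apply' _ _ _ hm]
      simp only [Pi.zero_apply, norm_zero]
      rw [Real.zero_rpow (by norm_num)]
  rw [heq]
  exact (summable_extend_zero (eFun_inj n)).mpr hz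

def TnL (n : ℕ) : ℓ2 →L[ℂ] ℓ2 :=
  LinearMap.mkContinuous
    { toFun := fun z : ℓ2 => (⟨Function.extend (eFun n) (⇑z) 0, memℓp_ext n z⟩ : ℓ2)
      map_add' := by
        intro z w
        apply lp.ext
        funext m
        show Function.extend (eFun n) (⇑(z+w)) 0 m
            = Function.extend (eFun n) (⇑z) 0 m + Function.extend (eFun n) (⇑w) 0 m
        rcases em (∃ k, eFun n k = m) with ⟨k, rfl⟩ | hm
        · rw [(eFun_inj n).extend_apply, (eFun_inj n).extend_apply, (eFun_inj n).extend_apply]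
          rfl
        · rw [Function.extend_apply' _ _ _ hm, Function.extend_apply' _ _ _ hm,
            Function.extend_apply' _ _ _ hm]
          simp
      map_smul' := by
        intro c z
        apply lp.ext
        funext m
        show Function.extend (eFun n) (⇑(c • z)) 0 m
            = c * Function.extend (eFun n) (⇑z) 0 m
        rcases em (∃ k, eFun n k = m) with ⟨k, rfl⟩ | hm
        · rw [(eFun_inj n).extend_apply, (eFun_inj n).extend_apply]
          rfl
        · rw [Function.extend_apply' _ _ _ hm, Function.extend_apply' _ _ _ hm]
          simp }
    1
    (by
      intro z
      rw [one_mul]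
      show ‖(⟨Function.extend (eFun n) (⇑z) 0, memℓp_ext n z⟩ : ℓ2)‖ ≤ ‖z‖
      rw [lp.norm_eq_tsum_rpow h2pos, lp.norm_eq_tsum_rpow h2pos]
      apply Real.rpow_le_rpow (tsum_nonneg (fun m => by positivity)) ?_ (by norm_num)
      have heq : ∀ m : ℕ, ‖(⟨Function.extend (eFun n) (⇑z) 0, memℓp_ext n z⟩ : ℓ2) m‖ ^ (2:ℝ≥0∞).toReal
          = Function.extend (eFun n) (fun k => ‖z k‖ ^ (2:ℝ≥0∞).toReal) 0 m := by
        intro m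
        show ‖Function.extend (eFun n) (⇑z) 0 m‖ ^ (2:ℝ≥0∞).toReal = _
        rcases em (∃ k, eFun n k = m) with ⟨k, rfl⟩ | hm
        · rw [(eFun_inj n).extend_apply, (eFun_inj n).extend_apply]
        · rw [Function.extend_apply' _ _ _ hm, Function.extend_apply' _ _ _ hm]
          simp only [Pi.zero_apply, norm_zero]
          rw [Real.zero_rpow (by norm_num)]
      calc (∑' m, ‖(⟨Function.extend (eFun n) (⇑z) 0, memℓp_ext n z⟩ : ℓ2) m‖ ^ (2:ℝ≥0∞).toReal)
          = ∑' m, Function.extend (eFun n) (fun k => ‖z k‖ ^ (2:ℝ≥0∞).toReal) 0 m := by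
            exact tsum_congr heq
        _ = ∑' k, ‖z k‖ ^ (2:ℝ≥0∞).toReal := by
            rw [← Function.Injective.tsum_eq (eFun_inj n) ?_]
            · exact tsum_congr (fun k => (eFun_inj n).extend_apply _ _ _)
            · intro m hm
              by_contra hcon
              rcases em (∃ k, eFun n k = m) with hmem' | hmem'
              · exact hcon (Set.mem_range.mpr hmem')
              · apply hm
                rw [Function.extend_apply' _ _ _ hmem']
                rfl
        _ ≤ ∑' k, ‖z k‖ ^ (2:ℝ≥0∞).toReal := le_refl _)

lemma TnL_apply (n : ℕ) (z : ℓ2) (m : ℕ) :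
    (TnL n z) m = Function.extend (eFun n) (⇑z) 0 m := rfl

end L2Infra

section Quad

open scoped ENNReal NNReal ComplexConjugate

lemma memℓp_shift (m : ℕ) (y : ℓ2) : Memℓp (fun j : ℕ => y (j+m)) 2 := by
  apply memℓp_gen
  have hy : Summable (fun j => ‖y j‖ ^ (2:ℝ≥0∞).toReal) := (memℓp_gen_iff h2pos).mp (lp.memℓp y)
  exact hy.comp_injective (add_left_injective m)

def shiftV (m : ℕ) (y : ℓ2) : ℓ2 := ⟨fun j => y (j+m), memℓp_shift m y⟩

lemma shiftV_norm_le (m : ℕ) (y : ℓ2) : ‖shiftV m y‖ ≤ ‖y‖ := by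
  have hy : Summable (fun j => ‖y j‖ ^ (2:ℝ≥0∞).toReal) := (memℓp_gen_iff h2pos).mp (lp.memℓp y)
  rw [lp.norm_eq_tsum_rpow h2pos, lp.norm_eq_tsum_rpow h2pos]
  apply Real.rpow_le_rpow (tsum_nonneg fun j => by positivity) ?_ (by norm_num)
  exact (hy.comp_injective (add_left_injective m)).tsum_le_tsum_of_inj (fun j : ℕ => j + m) (add_left_injective m)
    (fun c _ => by positivity) (fun j => le_refl _)
    hy

lemma shiftV_add (m : ℕ) (y y' : ℓ2) : shiftV m (y + y') = shiftV m y + shiftV m y' :=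
  lp.ext (funext fun j => rfl)

lemma shiftV_smul (m : ℕ) (c : ℂ) (y : ℓ2) : shiftV m (c • y) = c • shiftV m y :=
  lp.ext (funext fun j => rfl)

def Bform (m : ℕ) : ℓ2 →L[ℂ] ℓ2 →L[ℂ] ℂ :=
  LinearMap.mkContinuous₂
    (LinearMap.mk₂ ℂ (fun x y : ℓ2 => (inner ℂ (star x) (shiftV m y) : ℂ))
      (fun x x' y => by
        show (inner ℂ (star (x + x')) (shiftV m y) : ℂ)
          = (inner ℂ (star x) (shiftV m y) : ℂ) + (inner ℂ (star x') (shiftV m y) : ℂ)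
        rw [star_add, inner_add_left])
      (fun c x y => by
        show (inner ℂ (star (c • x)) (shiftV m y) : ℂ) = c • (inner ℂ (star x) (shiftV m y) : ℂ)
        rw [star_smul, inner_smul_left, starRingEnd_apply, star_star, smul_eq_mul])
      (fun x y y' => by
        show (inner ℂ (star x) (shiftV m (y + y')) : ℂ)
          = (inner ℂ (star x) (shiftV m y) : ℂ) + (inner ℂ (star x) (shiftV m y') : ℂ)
        rw [shiftV_add, inner_add_right])
      (fun c x y => by
        show (inner ℂ (star x) (shiftV m (c • y)) : ℂ) = c • (inner ℂ (star x) (shiftV m y) : ℂ)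
        rw [shiftV_smul, inner_smul_right, smul_eq_mul]))
    1
    (fun x y => by
      rw [one_mul]
      calc ‖(inner ℂ (star x) (shiftV m y) : ℂ)‖ ≤ ‖star x‖ * ‖shiftV m y‖ :=
            norm_inner_le_norm _ _
        _ ≤ ‖x‖ * ‖y‖ := by
            rw [norm_star]
            exact mul_le_mul_of_nonneg_left (shiftV_norm_le m y) (norm_nonneg x))

lemma Bform_norm_le (m : ℕ) (x y : ℓ2) : ‖Bform m x y‖ ≤ ‖x‖ * ‖y‖ := by
  show ‖(inner ℂ (star x) (shiftV m y) : ℂ)‖ ≤ ‖x‖ * ‖y‖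
  calc ‖(inner ℂ (star x) (shiftV m y) : ℂ)‖ ≤ ‖star x‖ * ‖shiftV m y‖ := norm_inner_le_norm _ _
    _ ≤ ‖x‖ * ‖y‖ := by
        rw [norm_star]
        exact mul_le_mul_of_nonneg_left (shiftV_norm_le m y) (norm_nonneg x)

lemma Bform_tsum (m : ℕ) (x y : ℓ2) : Bform m x y = ∑' j, x j * y (j+m) := by
  show (inner ℂ (star x) (shiftV m y) : ℂ) = _
  rw [lp.inner_eq_tsum]
  refine tsum_congr fun j => ?_
  rw [RCLike.inner_apply']
  show (starRingEnd ℂ) ((star x) j) * y (j+m) = x j * y (j+m)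
  rw [lp.star_apply, starRingEnd_apply, star_star]

def quadF (m : ℕ) (w : ℓ2) : ℓ2 → ℂ := fun x => Bform m (x - w) (x - w)

lemma memAu_quadF (m : ℕ) (w : ℓ2) (hw : ‖w‖ ≤ 1) : MemAu (quadF m w) := by
  constructor
  · have hb := (Bform m).isBoundedBilinearMap
    have h1 : Differentiable ℂ (fun x : ℓ2 => ((x - w), (x - w))) :=
      (differentiable_id.sub_const w).prodMk (differentiable_id.sub_const w)
    have h2 : Differentiable ℂ (quadF m w) := by
      have heq : quadF m w
          = (fun q : ℓ2 × ℓ2 => Bform m q.1 q.2) ∘ (fun x : ℓ2 => (x - w, x - w)) := rfl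
      rw [heq]
      exact fun x => (hb.differentiableAt _).comp x (h1 x)
    exact h2.differentiableOn
  · apply LipschitzOnWith.uniformContinuousOn (K := (4:ℝ≥0))
    apply LipschitzOnWith.of_dist_le_mul
    intro x hx y hy
    rw [oB, mem_ball_zero_iff] at hx hy
    set u := x - w with hu
    set v := y - w with hv
    have huv : u - v = x - y := by rw [hu, hv]; abel
    have hun : ‖u‖ ≤ 2 := le_trans (norm_sub_le _ _) (by linarith)
    have hvn : ‖v‖ ≤ 2 := le_trans (norm_sub_le _ _) (by linarith)
    have key : quadF m w x - quadF m w y = Bform m u (u - v) + Bform m (u - v) v := by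
      have h1 : Bform m u (u - v) = Bform m u u - Bform m u v := map_sub (Bform m u) u v
      have h2 : Bform m (u - v) v = Bform m u v - Bform m v v := by
        rw [map_sub (Bform m) u v, ContinuousLinearMap.sub_apply]
      rw [h1, h2]
      show Bform m u u - Bform m v v = _
      ring
    rw [dist_eq_norm, key, dist_eq_norm]
    calc ‖Bform m u (u - v) + Bform m (u - v) v‖
        ≤ ‖Bform m u (u - v)‖ + ‖Bform m (u - v) v‖ := norm_add_le _ _
      _ ≤ ‖u‖ * ‖u - v‖ + ‖u - v‖ * ‖v‖ :=
          add_le_add (Bform_norm_le _ _ _) (Bform_norm_le _ _ _)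
      _ ≤ 4 * ‖x - y‖ := by
          rw [huv]
          nlinarith [norm_nonneg (x - y)]

def sVec (n : ℕ) (z : ℓ2) : ℓ2 := lp.single 2 n 1 + TnL n z

lemma sVec_norm_le (n : ℕ) (z : ℓ2) : ‖sVec n z‖ ≤ 1 + ‖z‖ := by
  calc ‖sVec n z‖ ≤ ‖lp.single (E := fun _ : ℕ => ℂ) 2 n 1‖ + ‖TnL n z‖ := norm_add_le _ _
    _ ≤ 1 + ‖z‖ := by
        apply add_le_add
        · have := lp.norm_single (E := fun _ : ℕ => ℂ) (p := 2) (by norm_num) n (1:ℂ)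
          rw [this]
          simp
        · have h := (TnL n).le_of_opNorm_le (LinearMap.mkContinuous_norm_le _ zero_le_one _) z
          rwa [one_mul] at h

lemma sVec_apply_self (n : ℕ) (z : ℓ2) : sVec n z n = 1 := by
  show lp.single (E := fun _ : ℕ => ℂ) 2 n (1:ℂ) n + TnL n z n = 1
  rw [lp.single_apply_self, TnL_apply, Function.extend_apply']
  · simp
  · rintro ⟨k, hk⟩
    have := eFun_gt n k
    omega

lemma sVec_apply_e (n : ℕ) (z : ℓ2) (k : ℕ) : sVec n z (eFun n k) = z k := by
  show lp.single (E := fun _ : ℕ => ℂ) 2 n (1:ℂ) (eFun n k) + TnL n z (eFun n k) = z k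
  rw [lp.single_apply_ne 2 n 1 (ne_of_gt (eFun_gt n k)), TnL_apply,
    (eFun_inj n).extend_apply]
  simp

lemma sVec_apply_zero (n : ℕ) (z : ℓ2) (m : ℕ) (h1 : m ≠ n) (h2 : ¬∃ k, eFun n k = m) :
    sVec n z m = 0 := by
  show lp.single (E := fun _ : ℕ => ℂ) 2 n (1:ℂ) m + TnL n z m = 0
  rw [lp.single_apply_ne 2 n 1 h1, TnL_apply, Function.extend_apply' _ _ _ h2]
  simp

lemma Bform_sVec (n k : ℕ) (z : ℓ2) : Bform (3^k) (sVec n z) (sVec n z) = z k := by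
  rw [Bform_tsum]
  rw [tsum_eq_single n ?_]
  · have he : n + 3^k = eFun n k := rfl
    rw [sVec_apply_self, he, sVec_apply_e, one_mul]
  · intro j hj
    rcases em (∃ i, eFun n i = j) with ⟨i, rfl⟩ | hmem
    · have hz : sVec n z (eFun n i + 3^k) = 0 := by
        apply sVec_apply_zero
        · have h1 := eFun_gt n i
          have h2 : 0 < 3^k := pow_pos (by norm_num) k
          omega
        · rintro ⟨l, hl⟩
          simp only [eFun] at hl
          exact pow3_add_pow3_ne i k l (by omega)
      rw [hz, mul_zero]
    · rw [sVec_apply_zero n z j hj hmem, zero_mul]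

end Quad

section Homs

def ccf (r : ℝ) : ℂ := ((1-r)/2 : ℝ)

lemma ccf_ne_zero {r : ℝ} (hr1 : r < 1) : ccf r ≠ 0 := by
  simp only [ccf, ne_eq, Complex.ofReal_eq_zero]
  intro h
  have : (1:ℝ) - r = 0 := by linarith [div_eq_zero_iff.mp h]
  linarith

lemma ccf_norm {r : ℝ} (hr1 : r < 1) : ‖ccf r‖ = (1-r)/2 := by
  simp only [ccf, Complex.norm_real, Real.norm_eq_abs]
  rw [abs_of_nonneg (by linarith)]

def vpt (r : ℝ) (n : ℕ) (p : ℓ2 × ℓ2) : ℓ2 := p.1 + ccf r • sVec n p.2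

lemma vpt_mem {r : ℝ} (hr0 : 0 < r) (hr1 : r < 1) {p : ℓ2 × ℓ2} (hp : p ∈ prodBall r)
    (n : ℕ) : vpt r n p ∈ oB := by
  have hw : ‖p.1‖ < r := hp.1
  have hz : ‖p.2‖ < 1 := hp.2
  rw [oB, mem_ball_zero_iff]
  have hs := sVec_norm_le n p.2
  calc ‖vpt r n p‖ ≤ ‖p.1‖ + ‖ccf r • sVec n p.2‖ := norm_add_le _ _
    _ = ‖p.1‖ + (1-r)/2 * ‖sVec n p.2‖ := by rw [norm_smul, ccf_norm hr1]
    _ < 1 := by nlinarith [norm_nonneg (sVec n p.2), norm_nonneg p.1]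

lemma isOpen_prodBall (r : ℝ) : IsOpen (prodBall r) := by
  have h : prodBall r = (ball (0:ℓ2) r) ×ˢ (ball (0:ℓ2) 1) := by
    ext p
    simp [prodBall, Set.mem_prod, mem_ball_zero_iff]
  rw [h]
  exact isOpen_ball.prod isOpen_ball

lemma vpt_diff (r : ℝ) (n : ℕ) : Differentiable ℂ (fun p : ℓ2 × ℓ2 => vpt r n p) := by
  show Differentiable ℂ (fun p : ℓ2 × ℓ2 => p.1 + ccf r • (lp.single 2 n 1 + TnL n p.2))
  exact differentiable_fst.add
    (Differentiable.const_smul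
      ((differentiable_const _).add ((TnL n).differentiable.comp differentiable_snd)) (ccf r))

lemma memAu_one : MemAu (fun _ : ℓ2 => (1:ℂ)) :=
  ⟨differentiableOn_const _, uniformContinuous_const.ucOn _⟩

lemma zero_mem_oB : (0:ℓ2) ∈ oB := by
  rw [oB, mem_ball_zero_iff, norm_zero]
  norm_num

def evalHom0 : MuHom where
  toFun f := f 0
  map_add _ _ _ _ := rfl
  map_mul _ _ _ _ := rfl
  map_smul _ _ _ := rfl
  respects f g _ _ h := h zero_mem_oB
  nonzero := ⟨fun _ => 1, memAu_one, one_ne_zero⟩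
  cont := ⟨1, fun f hf => by rw [one_mul]; exact norm_le_supNorm hf.bdd zero_mem_oB⟩

def homAt (r : ℝ) (hr0 : 0 < r) (hr1 : r < 1) (p : ℓ2 × ℓ2) (hp : p ∈ prodBall r) : MuHom where
  toFun f := ulim (fun n => f (vpt r n p))
  map_add f g hf hg := by
    obtain ⟨Cf, hCf⟩ := hf.bdd
    obtain ⟨Cg, hCg⟩ := hg.bdd
    refine ulim_eq ?_
    have h1 := tendsto_ulim (fun n => hCf _ (vpt_mem hr0 hr1 hp n))
    have h2 := tendsto_ulim (fun n => hCg _ (vpt_mem hr0 hr1 hp n))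
    exact Filter.Tendsto.congr (fun n => rfl) (h1.add h2)
  map_mul f g hf hg := by
    obtain ⟨Cf, hCf⟩ := hf.bdd
    obtain ⟨Cg, hCg⟩ := hg.bdd
    refine ulim_eq ?_
    have h1 := tendsto_ulim (fun n => hCf _ (vpt_mem hr0 hr1 hp n))
    have h2 := tendsto_ulim (fun n => hCg _ (vpt_mem hr0 hr1 hp n))
    exact Filter.Tendsto.congr (fun n => rfl) (h1.mul h2)
  map_smul c f hf := by
    obtain ⟨Cf, hCf⟩ := hf.bdd
    refine ulim_eq ?_
    have h1 := (tendsto_ulim (fun n => hCf _ (vpt_mem hr0 hr1 hp n))).const_mul c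
    exact Filter.Tendsto.congr (fun n => rfl) h1
  respects f g hf hg h :=
    congrArg ulim (funext fun n => h (vpt_mem hr0 hr1 hp n))
  nonzero := ⟨fun _ => 1, memAu_one, by
    show ulim (fun _ => (1:ℂ)) ≠ 0
    rw [ulim_const]
    exact one_ne_zero⟩
  cont := ⟨1, fun f hf => by
    rw [one_mul]
    exact norm_ulim_le (fun n => norm_le_supNorm hf.bdd (vpt_mem hr0 hr1 hp n))⟩

lemma homAt_coord (r : ℝ) (hr0 : 0 < r) (hr1 : r < 1) (p : ℓ2 × ℓ2) (hp : p ∈ prodBall r)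
    (m : ℕ) : (homAt r hr0 hr1 p hp).toFun (coord m) = p.1 m := by
  show ulim (fun n => coord m (vpt r n p)) = p.1 m
  refine ulim_eq ?_
  have hev : ∀ᶠ n in atTop, coord m (vpt r n p) = p.1 m := by
    rw [eventually_atTop]
    refine ⟨m+1, fun n hn => ?_⟩
    show p.1 m + ccf r * (lp.single (E := fun _ : ℕ => ℂ) 2 n (1:ℂ) m + TnL n p.2 m) = p.1 m
    have h1 : lp.single (E := fun _ : ℕ => ℂ) 2 n (1:ℂ) m = 0 :=
      lp.single_apply_ne 2 n 1 (by omega)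
    have h2 : TnL n p.2 m = 0 := by
      rw [TnL_apply, Function.extend_apply']
      · rfl
      · rintro ⟨k, hk⟩
        have := eFun_gt n k
        omega
    rw [h1, h2]
    ring
  have hev' : ∀ᶠ n in (UU : Filter ℕ), coord m (vpt r n p) = p.1 m :=
    hev.filter_mono UU_le_atTop
  exact Filter.Tendsto.congr' (Filter.EventuallyEq.symm hev') tendsto_const_nhds

lemma homAt_quad (r : ℝ) (hr0 : 0 < r) (hr1 : r < 1) (p : ℓ2 × ℓ2) (hp : p ∈ prodBall r)
    (k : ℕ) :
    (homAt r hr0 hr1 p hp).toFun (quadF (3^k) p.1) = (ccf r)^2 * p.2 k := by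
  show ulim (fun n => quadF (3^k) p.1 (vpt r n p)) = _
  have hval : ∀ n, quadF (3^k) p.1 (vpt r n p) = (ccf r)^2 * p.2 k := by
    intro n
    show Bform (3^k) (vpt r n p - p.1) (vpt r n p - p.1) = _
    have h1 : vpt r n p - p.1 = ccf r • sVec n p.2 := by
      rw [vpt]
      abel
    rw [h1, map_smul (Bform (3^k)) (ccf r) (sVec n p.2), ContinuousLinearMap.smul_apply,
      map_smul (Bform (3^k) (sVec n p.2)) (ccf r) (sVec n p.2), smul_eq_mul, smul_eq_mul,
      Bform_sVec]
    ring
  simp only [hval]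
  exact ulim_const _

end Homs

/-- for every `0 < r < 1` there is an analytic injection
`Φ_r : rB × B → ℳᵤ(B)` with `π(Φ_r(w,z)) = w`. -/
theorem stmt0 (r : ℝ) (hr0 : 0 < r) (hr1 : r < 1) :
    ∃ Φr : ℓ2 × ℓ2 → MuHom,
      -- (i) injectivity
      (∀ p ∈ prodBall r, ∀ q ∈ prodBall r,
        (∀ f, MemAu f → (Φr p).toFun f = (Φr q).toFun f) → p = q) ∧
      -- (ii) π(Φ_r(w,z)) = w, so Φ_r(w,·) maps into the fiber π⁻¹(w)
      (∀ p ∈ prodBall r, ∀ n : ℕ, (Φr p).toFun (coord n) = p.1 n) ∧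
      -- (iii) analyticity: for every f ∈ 𝒜ᵤ(B), (w,z) ↦ Φ_r(w,z)(f) is a bounded
      -- holomorphic function on rB × B
      (∀ f, MemAu f →
        DifferentiableOn ℂ (fun p => (Φr p).toFun f) (prodBall r) ∧
        ∃ C, ∀ p ∈ prodBall r, ‖(Φr p).toFun f‖ ≤ C) := by
    classical
  refine ⟨fun p => if h : p ∈ prodBall r then homAt r hr0 hr1 p h else evalHom0, ?_, ?_, ?_⟩
  · -- injectivity
    intro p hp q hq heq
    simp only [dif_pos hp, dif_pos hq] at heq
    have hw : p.1 = q.1 := by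
      apply lp.ext
      funext m
      have h := heq (coord m) (memAu_coord m)
      rwa [homAt_coord, homAt_coord] at h
    have hcc : ccf r ≠ 0 := ccf_ne_zero hr1
    have hz : p.2 = q.2 := by
      apply lp.ext
      funext k
      have hw1 : ‖p.1‖ ≤ 1 := le_trans (le_of_lt hp.1) (le_of_lt hr1)
      have h := heq (quadF (3^k) p.1) (memAu_quadF (3^k) p.1 hw1)
      rw [homAt_quad] at h
      rw [show (quadF (3^k) p.1) = quadF (3^k) q.1 from by rw [hw]] at h
      rw [homAt_quad] at h
      exact mul_left_cancel₀ (pow_ne_zero 2 hcc) h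
    exact Prod.ext hw hz
  · -- fiber projection
    intro p hp m
    simp only [dif_pos hp]
    exact homAt_coord r hr0 hr1 p hp m
  · -- analyticity and boundedness
    intro f hf
    obtain ⟨C, hC⟩ := hf.bdd
    have hM : ∀ (n : ℕ), ∀ x ∈ prodBall r, ‖f (vpt r n x)‖ ≤ max C 0 := fun n x hx =>
      le_trans (hC _ (vpt_mem hr0 hr1 hx n)) (le_max_left _ _)
    constructor
    · have hd : ∀ n : ℕ, DifferentiableOn ℂ (fun x : ℓ2 × ℓ2 => f (vpt r n x)) (prodBall r) := by
        intro n
        exact DifferentiableOn.comp hf.1 (vpt_diff r n).differentiableOn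
          (fun x hx => vpt_mem hr0 hr1 hx n)
      have hD := diffOn_ulim (isOpen_prodBall r) (fun n x => f (vpt r n x)) (max C 0)
        (le_max_right _ _) hd hM
      refine hD.congr ?_
      intro x hx
      simp only [dif_pos hx]
      rfl
    · refine ⟨max C 0, fun x hx => ?_⟩
      simp only [dif_pos hx]
      exact norm_ulim_le (fun n => hM n x hx)
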